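/- arXiv:2603.05703 — 4 statements merged into one kernel-verified Lean document; each statement's English description precedes it below -/
import Mathlib

section
/- Let X be an n×d real matrix of full column rank d, and let F be an n×d real matrix. Then F X^T + X F^T = 0 if and only if there exists a skew-symmetric d×d matrix A (A^T = -A) such that F = X A. -/
open Matrix

lemma isUnit_transpose_mul_self_of_rank {n d : ℕ}
    (X : Matrix (Fin n) (Fin d) ℝ) (hX : X.rank = d) : IsUnit (Xᵀ * X) := by
  rw [← Matrix.mulVec_injective_iff_isUnit, ← Matrix.coe_mulVecLin,
    ← LinearMap.ker_eq_bot, Matrix.ker_mulVecLin_transpose_mul_self]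
  have h := LinearMap.finrank_range_add_finrank_ker (Matrix.mulVecLin X)
  have hr : X.rank = Module.finrank ℝ (LinearMap.range X.mulVecLin) := rfl
  rw [← hr, hX] at h
  simp only [Module.finrank_fin_fun] at h
  have hker : Module.finrank ℝ (LinearMap.ker X.mulVecLin) = 0 := by omega
  exact Submodule.finrank_eq_zero.mp hker

/-- Characterization of invisible dynamics: for full-column-rank `X`, a velocity
field `F` satisfies `F * Xᵀ + X * Fᵀ = 0` iff `F = X * A` for a skew-symmetric `A`. -/
theorem invisible_dynamics_iff {n d : ℕ}
    (X : Matrix (Fin n) (Fin d) ℝ) (hX : X.rank = d)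
    (F : Matrix (Fin n) (Fin d) ℝ) :
    F * Xᵀ + X * Fᵀ = 0 ↔
      ∃ A : Matrix (Fin d) (Fin d) ℝ, Aᵀ = -A ∧ F = X * A := by
  have hU : IsUnit (Xᵀ * X) := isUnit_transpose_mul_self_of_rank X hX
  have hdet : IsUnit (Xᵀ * X).det := (Matrix.isUnit_iff_isUnit_det _).mp hU
  set B := (Xᵀ * X)⁻¹ with hB
  have hInv : (Xᵀ * X) * B = 1 := Matrix.mul_nonsing_inv _ hdet
  have hInv' : B * (Xᵀ * X) = 1 := Matrix.nonsing_inv_mul _ hdet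
  have hBsym : Bᵀ = B := by
    rw [hB, Matrix.transpose_nonsing_inv, Matrix.transpose_mul, Matrix.transpose_transpose]
  constructor
  · intro h
    have h1 : F * Xᵀ = -(X * Fᵀ) := by
      rw [eq_neg_iff_add_eq_zero]; exact h
    refine ⟨-(Fᵀ * X * B), ?_, ?_⟩
    · -- skew-symmetry
      have hmul : Xᵀ * F * Xᵀ * X + Xᵀ * X * Fᵀ * X = 0 := by
        have := congrArg (fun M => Xᵀ * M * X) h
        simpa [Matrix.mul_add, Matrix.add_mul, Matrix.mul_assoc] using this
      have hkey : B * (Xᵀ * F) + Fᵀ * X * B = 0 := by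
        have := congrArg (fun M => B * M * B) hmul
        simp only [Matrix.mul_add, Matrix.add_mul, Matrix.mul_zero, Matrix.zero_mul] at this
        calc B * (Xᵀ * F) + Fᵀ * X * B
            = B * (Xᵀ * F * ((Xᵀ * X) * B)) + ((B * (Xᵀ * X)) * (Fᵀ * X)) * B := by
              rw [hInv, hInv', Matrix.mul_one, Matrix.one_mul]
          _ = B * (Xᵀ * F * Xᵀ * X) * B + B * (Xᵀ * X * Fᵀ * X) * B := by
              simp only [Matrix.mul_assoc]
          _ = B * (Xᵀ * F * Xᵀ * X + Xᵀ * X * Fᵀ * X) * B := by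
              simp only [Matrix.mul_add, Matrix.add_mul]
          _ = 0 := by rw [hmul, Matrix.mul_zero, Matrix.zero_mul]
      rw [Matrix.transpose_neg, Matrix.transpose_mul, Matrix.transpose_mul,
        Matrix.transpose_transpose, hBsym, neg_neg]
      exact neg_eq_of_add_eq_zero_right hkey
    · -- F = X * A
      calc F = F * ((Xᵀ * X) * B) := by rw [hInv, Matrix.mul_one]
        _ = (F * Xᵀ) * (X * B) := by simp only [Matrix.mul_assoc]
        _ = -(X * Fᵀ) * (X * B) := by rw [h1]
        _ = X * -(Fᵀ * X * B) := by
            simp only [Matrix.neg_mul, Matrix.mul_neg, Matrix.mul_assoc]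
  · rintro ⟨A, hA, rfl⟩
    rw [Matrix.transpose_mul, hA]
    simp only [Matrix.neg_mul, Matrix.mul_neg, Matrix.mul_assoc, add_neg_cancel]
end

section
/- Every n×d real matrix Z with X of full column rank decomposes uniquely as Z = XΩ + H where Ω is skew-symmetric and X^T H is symmetric. The skew part Ω is the unique solution of the Lyapunov equation (X^T X)Ω + Ω(X^T X) = X^T Z − Z^T X. -/
open Matrix

private lemma frob_nonneg {m p : ℕ} (A : Matrix (Fin m) (Fin p) ℝ) :
    0 ≤ (Aᵀ * A).trace := by
  rw [Matrix.trace]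
  refine Finset.sum_nonneg fun j _ => ?_
  simp only [Matrix.diag_apply, Matrix.mul_apply, Matrix.transpose_apply]
  exact Finset.sum_nonneg fun i _ => mul_self_nonneg _

private lemma frob_eq_zero {m p : ℕ} (A : Matrix (Fin m) (Fin p) ℝ)
    (h : (Aᵀ * A).trace = 0) : A = 0 := by
  ext i j
  rw [Matrix.trace] at h
  have h1 := (Finset.sum_eq_zero_iff_of_nonneg (fun j _ => by
    simp only [Matrix.diag_apply, Matrix.mul_apply, Matrix.transpose_apply]
    exact Finset.sum_nonneg fun i _ => mul_self_nonneg _)).mp h j (Finset.mem_univ j)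
  simp only [Matrix.diag_apply, Matrix.mul_apply, Matrix.transpose_apply] at h1
  have h2 := (Finset.sum_eq_zero_iff_of_nonneg (fun i _ => mul_self_nonneg _)).mp h1 i
    (Finset.mem_univ i)
  simpa using mul_self_eq_zero.mp h2

private lemma mulVecLin_inj {n d : ℕ} (X : Matrix (Fin n) (Fin d) ℝ) (hX : X.rank = d) :
    Function.Injective X.mulVecLin := by
  rw [← LinearMap.ker_eq_bot]
  have h := X.mulVecLin.finrank_range_add_finrank_ker
  rw [show Module.finrank ℝ (LinearMap.range X.mulVecLin) = d from hX] at h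
  simp only [Module.finrank_pi, Fintype.card_fin] at h
  exact Submodule.finrank_eq_zero.mp (by omega)

private lemma mul_left_cancel0 {n d : ℕ} (X : Matrix (Fin n) (Fin d) ℝ) (hX : X.rank = d)
    (Ω : Matrix (Fin d) (Fin d) ℝ) (h : X * Ω = 0) : Ω = 0 := by
  ext k j
  have hc : X.mulVecLin (fun k => Ω k j) = X.mulVecLin 0 := by
    ext i
    simpa [Matrix.mulVecLin_apply, Matrix.mulVec, dotProduct, Matrix.mul_apply] using
      congrFun (congrFun h i) j
  simpa using congrFun (mulVecLin_inj X hX hc) k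

private lemma lyap_inj {n d : ℕ} (X : Matrix (Fin n) (Fin d) ℝ) (hX : X.rank = d)
    (Ω : Matrix (Fin d) (Fin d) ℝ)
    (h : (Xᵀ * X) * Ω + Ω * (Xᵀ * X) = 0) : Ω = 0 := by
  have key : ((X * Ω)ᵀ * (X * Ω)).trace + ((Ω * Xᵀ)ᵀ * (Ω * Xᵀ)).trace = 0 := by
    have e1 : (X * Ω)ᵀ * (X * Ω) = Ωᵀ * ((Xᵀ * X) * Ω) := by
      simp [Matrix.transpose_mul, Matrix.mul_assoc]
    have e2 : ((Ω * Xᵀ)ᵀ * (Ω * Xᵀ)).trace = (Ωᵀ * (Ω * (Xᵀ * X))).trace := by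
      rw [Matrix.transpose_mul, Matrix.transpose_transpose]
      rw [show X * Ωᵀ * (Ω * Xᵀ) = (X * (Ωᵀ * Ω)) * Xᵀ by
        simp [Matrix.mul_assoc], Matrix.trace_mul_comm,
        show Xᵀ * (X * (Ωᵀ * Ω)) = (Xᵀ * X) * (Ωᵀ * Ω) by rw [Matrix.mul_assoc],
        Matrix.trace_mul_comm, Matrix.mul_assoc]
    rw [e1, e2, ← Matrix.trace_add, ← Matrix.mul_add, h, Matrix.mul_zero, Matrix.trace_zero]
  have h1 : X * Ω = 0 := by
    apply frob_eq_zero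
    have := frob_nonneg (X * Ω)
    have := frob_nonneg (Ω * Xᵀ)
    linarith
  exact mul_left_cancel0 X hX Ω h1

/-- Unique vertical-horizontal decomposition and the connection 1-form: every tangent
vector `Z` decomposes uniquely as `Z = X * Ω + H` with `Ω` skew-symmetric and `Xᵀ * H`
symmetric; moreover the skew part `Ω` solves the Lyapunov equation
`(Xᵀ X) Ω + Ω (Xᵀ X) = Xᵀ Z - Zᵀ X`. -/
theorem connection_one_form_decomposition {n d : ℕ}
    (X : Matrix (Fin n) (Fin d) ℝ) (hX : X.rank = d)
    (Z : Matrix (Fin n) (Fin d) ℝ) :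
    (∃! p : Matrix (Fin d) (Fin d) ℝ × Matrix (Fin n) (Fin d) ℝ,
      p.1ᵀ = -p.1 ∧ (Xᵀ * p.2)ᵀ = Xᵀ * p.2 ∧ Z = X * p.1 + p.2) ∧
    (∀ (Ω : Matrix (Fin d) (Fin d) ℝ) (H : Matrix (Fin n) (Fin d) ℝ),
      Ωᵀ = -Ω → (Xᵀ * H)ᵀ = Xᵀ * H → Z = X * Ω + H →
      (Xᵀ * X) * Ω + Ω * (Xᵀ * X) = Xᵀ * Z - Zᵀ * X) := by
  set G := Xᵀ * X with hG
  have hGt : Gᵀ = G := by simp [hG, Matrix.transpose_mul]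
  -- second part (pure algebra)
  have part2 : ∀ (Ω : Matrix (Fin d) (Fin d) ℝ) (H : Matrix (Fin n) (Fin d) ℝ),
      Ωᵀ = -Ω → (Xᵀ * H)ᵀ = Xᵀ * H → Z = X * Ω + H →
      G * Ω + Ω * G = Xᵀ * Z - Zᵀ * X := by
    intro Ω H hΩ hH hZ
    have hHX : Hᵀ * X = Xᵀ * H := by
      rw [← hH]; simp [Matrix.transpose_mul]
    subst hZ
    simp only [Matrix.transpose_add, Matrix.transpose_mul, Matrix.mul_add, Matrix.add_mul,
      hΩ, hHX, Matrix.neg_mul, ← Matrix.mul_assoc, ← hG]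
    rw [Matrix.mul_assoc Ω Xᵀ X, ← hG]
    abel
  -- the Lyapunov linear map
  let L : Matrix (Fin d) (Fin d) ℝ →ₗ[ℝ] Matrix (Fin d) (Fin d) ℝ :=
    { toFun := fun Ω => G * Ω + Ω * G
      map_add' := fun a b => by simp [Matrix.mul_add, Matrix.add_mul]; abel
      map_smul' := fun c a => by simp [Matrix.mul_smul, Matrix.smul_mul, smul_add] }
  have hLinj : Function.Injective L := by
    rw [← LinearMap.ker_eq_bot, LinearMap.ker_eq_bot']
    intro Ω hΩ
    exact lyap_inj X hX Ω hΩ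
  have hLsurj : Function.Surjective L := (LinearMap.injective_iff_surjective).mp hLinj
  obtain ⟨Ω, hΩ⟩ := hLsurj (Xᵀ * Z - Zᵀ * X)
  have hΩeq : G * Ω + Ω * G = Xᵀ * Z - Zᵀ * X := hΩ
  -- Ω is skew
  have hskew : Ωᵀ = -Ω := by
    have hL2 : L (-Ωᵀ) = Xᵀ * Z - Zᵀ * X := by
      show G * (-Ωᵀ) + (-Ωᵀ) * G = _
      have := congrArg Matrix.transpose hΩeq
      simp only [Matrix.transpose_add, Matrix.transpose_sub, Matrix.transpose_mul,
        Matrix.transpose_transpose, hGt] at this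
      simp only [Matrix.neg_mul, Matrix.mul_neg]
      rw [show -(G * Ωᵀ) + -(Ωᵀ * G) = -(Ωᵀ * G + G * Ωᵀ) by abel, this]
      abel
    have := hLinj (hL2.trans hΩeq.symm)
    simpa using congrArg Neg.neg this
  set H := Z - X * Ω with hH
  have hZeq : Z = X * Ω + H := by rw [hH]; abel
  have hHsym : (Xᵀ * H)ᵀ = Xᵀ * H := by
    rw [hH]
    simp only [Matrix.mul_sub, Matrix.transpose_sub, Matrix.transpose_mul,
      Matrix.transpose_transpose, ← Matrix.mul_assoc, ← hG, hGt]
    have : Zᵀ * X = Xᵀ * Z - (G * Ω + Ω * G) := by rw [hΩeq]; abel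
    rw [this, hskew]
    simp only [Matrix.neg_mul]
    abel
  refine ⟨⟨⟨Ω, H⟩, ⟨hskew, hHsym, hZeq⟩, ?_⟩, part2⟩
  rintro ⟨Ω', H'⟩ ⟨h1, h2, h3⟩
  have hΩ' : Ω' = Ω := hLinj ((part2 Ω' H' h1 h2 h3).trans hΩeq.symm)
  have hH' : H' = H := by
    subst hΩ'
    exact add_left_cancel (h3.symm.trans hZeq)
  rw [Prod.mk.injEq]
  exact ⟨hΩ', hH'⟩
end

section
/- Identifiability of symmetric dynamics: let X(t) solve Ẋ = NX with N symmetric, let S(t) be a differentiable path in O(d), and set X̃ = XS. Assume X̃(t) has full column rank for all t. If there exists a (possibly time-varying) symmetric matrix Ñ(t) with X̃'(t) = Ñ(t) X̃(t) for all t, then S'(t) = 0 for all t; i.e., S is constant. Conversely, if S is constant then X̃' = N X̃ with N symmetric. -/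
/-!
Differentiating `X̃ = X S` gives `X̃' = N X̃ + X̃ Ω` with `Ω = Sᵀ S'`, which is skew-symmetric
because `Sᵀ S = 1`. If also `X̃' = Ñ X̃` with `Ñ` symmetric, then
`X̃ᵀ X̃ Ω = X̃ᵀ Ñ X̃ - X̃ᵀ N X̃` is symmetric; for skew-symmetric `Ω` this forces `X̃ Ω = 0`,
hence `Ω = 0` by full column rank, and `S' = S Ω = 0`.
-/

open Matrix

namespace Matrix

variable {m n k : Type*} [Fintype n]

theorem mulVec_injective_of_rank_eq_card {K : Type*} [Field K] {A : Matrix m n K}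
    (hA : A.rank = Fintype.card n) : Function.Injective A.mulVec := by
  rw [mulVec_injective_iff, linearIndependent_iff_card_eq_finrank_span, ← hA,
    rank_eq_finrank_span_cols, Set.finrank]

theorem eq_zero_of_mul_eq_zero_of_rank_eq_card {K : Type*} [Field K] {A : Matrix m n K}
    {B : Matrix n k K} (hA : A.rank = Fintype.card n) (hAB : A * B = 0) : B = 0 := by
  ext i j
  have hcol : A *ᵥ (fun l => B l j) = A *ᵥ 0 := by
    ext r
    simpa [mulVec, dotProduct, mul_apply] using congrFun (congrFun hAB r) j
  exact congrFun (mulVec_injective_of_rank_eq_card hA hcol) i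

/-- With `G = Aᵀ A`, symmetry of `G Ω` gives `G Ω = -Ω G`, so `tr (Ω G Ω) = 0` by cyclicity;
but `tr (Ω G Ω) = -‖A Ω‖²` in the Frobenius norm. -/
theorem mul_eq_zero_of_isSymm_gram_mul [Fintype m] {A : Matrix m n ℝ} {Ω : Matrix n n ℝ}
    (hΩ : Ωᵀ = -Ω) (h : (Aᵀ * A * Ω).IsSymm) : A * Ω = 0 := by
  have hanti : Aᵀ * A * Ω = -(Ω * (Aᵀ * A)) := by
    rw [← h.eq, transpose_mul, hΩ, transpose_mul, transpose_transpose, neg_mul]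
  have htrace : (Ω * (Aᵀ * A) * Ω).trace = 0 := by
    have hcycle := trace_mul_cycle (Aᵀ * A) Ω Ω
    rw [hanti, neg_mul, trace_neg] at hcycle
    linarith
  rw [← trace_conjTranspose_mul_self_eq_zero_iff, conjTranspose_eq_transpose_of_trivial,
    transpose_mul, hΩ]
  simpa only [neg_mul, trace_neg, neg_eq_zero, Matrix.mul_assoc] using htrace

theorem eq_zero_of_mul_eq_mul_add_mul_of_isSymm [Fintype m] {N Ñ : Matrix m m ℝ}
    {A : Matrix m n ℝ} {Ω : Matrix n n ℝ} (hN : N.IsSymm) (hÑ : Ñ.IsSymm) (hΩ : Ωᵀ = -Ω)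
    (hA : A.rank = Fintype.card n) (h : Ñ * A = N * A + A * Ω) : Ω = 0 := by
  have hgram : Aᵀ * A * Ω = Aᵀ * Ñ * A - Aᵀ * N * A := by
    rw [Matrix.mul_assoc, Matrix.mul_assoc _ Ñ, h, Matrix.mul_add, Matrix.mul_assoc]; abel
  have hsymm (M : Matrix m m ℝ) (hM : M.IsSymm) : (Aᵀ * M * A).IsSymm := by
    rw [IsSymm, transpose_mul, transpose_mul, transpose_transpose, hM.eq, Matrix.mul_assoc]
  refine eq_zero_of_mul_eq_zero_of_rank_eq_card hA (mul_eq_zero_of_isSymm_gram_mul hΩ ?_)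
  rw [hgram]
  exact (hsymm Ñ hÑ).sub (hsymm N hN)

end Matrix

section Calculus

variable {m n k : Type*} [Fintype n]

theorem hasDerivAt_matrix_mul_apply {A : ℝ → Matrix m n ℝ} {B : ℝ → Matrix n k ℝ}
    {A' : Matrix m n ℝ} {B' : Matrix n k ℝ} {t : ℝ}
    (hA : ∀ i j, HasDerivAt (fun s => A s i j) (A' i j) t)
    (hB : ∀ i j, HasDerivAt (fun s => B s i j) (B' i j) t) (i : m) (j : k) :
    HasDerivAt (fun s => (A s * B s) i j) ((A' * B t + A t * B') i j) t := by
  have hsum : HasDerivAt (fun s => ∑ l, A s i l * B s l j)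
      (∑ l, (A' i l * B t l j + A t i l * B' l j)) t :=
    HasDerivAt.fun_sum fun l _ => (hA i l).mul (hB l j)
  simpa only [mul_apply, Matrix.add_apply, Finset.sum_add_distrib] using hsum

theorem transpose_mul_deriv_skew_of_orthogonal [DecidableEq n] {S : ℝ → Matrix n n ℝ}
    {S' : Matrix n n ℝ} {t : ℝ} (hS : ∀ i j, HasDerivAt (fun s => S s i j) (S' i j) t)
    (hOrth : ∀ s, (S s)ᵀ * S s = 1) : ((S t)ᵀ * S')ᵀ = -((S t)ᵀ * S') := by
  have hderiv := hasDerivAt_matrix_mul_apply (A := fun s => (S s)ᵀ) (fun i j => hS j i) hS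
  simp only [hOrth] at hderiv
  have hzero : S'ᵀ * S t + (S t)ᵀ * S' = 0 := by
    ext i j
    exact (hderiv i j).unique (hasDerivAt_const t _)
  rw [transpose_mul, transpose_transpose, ← eq_neg_iff_add_eq_zero.mpr hzero]

end Calculus

/-- Identifiability of symmetric dynamics: with `Ẋ = N X` (`N` symmetric), an orthogonal
gauge path `S(t)` and `X̃ = X S` of full column rank, the gauged trajectory `X̃` can be
generated by some (time-varying) symmetric matrix `Ñ(t)` iff the gauge is constant:
the forward direction forces `S'(t) = 0` for all `t`, and conversely a constant gauge
gives `X̃' = N X̃` with `N` symmetric. -/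
theorem symmetric_dynamics_identifiability {n d : ℕ}
    (N : Matrix (Fin n) (Fin n) ℝ) (hN : Nᵀ = N)
    (X : ℝ → Matrix (Fin n) (Fin d) ℝ)
    (S S' : ℝ → Matrix (Fin d) (Fin d) ℝ)
    (hX : ∀ t, ∀ i j, HasDerivAt (fun s => X s i j) ((N * X t) i j) t)
    (hS : ∀ t, ∀ i j, HasDerivAt (fun s => S s i j) (S' t i j) t)
    (hOrth : ∀ t, (S t)ᵀ * S t = 1)
    (hrank : ∀ t, (X t * S t).rank = d) :
    ((∃ Ntil : ℝ → Matrix (Fin n) (Fin n) ℝ,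
        (∀ t, (Ntil t)ᵀ = Ntil t) ∧
        (∀ t, ∀ i j, HasDerivAt (fun s => (X s * S s) i j)
          ((Ntil t * (X t * S t)) i j) t)) →
      ∀ t, S' t = 0) ∧
    ((∀ t, S' t = 0) →
      ∀ t, ∀ i j, HasDerivAt (fun s => (X s * S s) i j)
        ((N * (X t * S t)) i j) t) := by
  refine ⟨fun ⟨Ntil, hNtil, hNtilX⟩ t => ?_, fun hS'0 t i j => ?_⟩
  · have hSSt : S t * (S t)ᵀ = 1 := mul_eq_one_comm.mp (hOrth t)
    have hprod := hasDerivAt_matrix_mul_apply (hX t) (hS t)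
    have hgauge : Ntil t * (X t * S t) = N * (X t * S t) + X t * S t * ((S t)ᵀ * S' t) := by
      ext i j
      rw [(hNtilX t i j).unique (hprod i j), Matrix.mul_assoc (X t), ← Matrix.mul_assoc (S t),
        hSSt, Matrix.one_mul, Matrix.mul_assoc]
    have hΩ := eq_zero_of_mul_eq_mul_add_mul_of_isSymm hN (hNtil t)
      (transpose_mul_deriv_skew_of_orthogonal (hS t) hOrth) (by simpa using hrank t) hgauge
    rw [← Matrix.one_mul (S' t), ← hSSt, Matrix.mul_assoc, hΩ, Matrix.mul_zero]
  · simpa [hS'0 t, Matrix.mul_assoc] using hasDerivAt_matrix_mul_apply (hX t) (hS t) i j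
end

section
/- Vertical bracket norm formula: let X = UΛ^{1/2} where U ∈ ℝ^{n×d} has orthonormal columns and Λ = diag(λ₁,...,λ_d) with all λᵢ > 0, let S ∈ ℝ^{n×n} be skew-symmetric, and let Ω* be the unique skew-symmetric solution of (X^T X)Ω* + Ω*(X^T X) = 2 X^T S X. Then ‖XΩ*‖_F² = 4 Σ_{ι<γ} (λ_ι λ_γ)/(λ_ι + λ_γ) · ((U^T S U)_{ιγ})². -/
open Matrix

lemma sum_pairs_aux {d : ℕ} (f : Fin d → Fin d → ℝ) (hdiag : ∀ i, f i i = 0) :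
    ∑ i : Fin d, ∑ j : Fin d, f i j =
      ∑ i : Fin d, ∑ j ∈ Finset.univ.filter (fun j => i < j), (f i j + f j i) := by
  have h1 : ∀ i : Fin d, ∑ j : Fin d, f i j =
      ∑ j ∈ Finset.univ.filter (fun j => i < j), f i j
        + ∑ j ∈ Finset.univ.filter (fun j => j < i), f i j := by
    intro i
    rw [← Finset.sum_filter_add_sum_filter_not Finset.univ (fun j => i < j) (f i)]
    congr 1
    have : Finset.univ.filter (fun j => ¬ i < j) =
        insert i (Finset.univ.filter (fun j : Fin d => j < i)) := by
      ext j
      simp only [Finset.mem_filter, Finset.mem_univ, true_and, Finset.mem_insert]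
      constructor
      · intro h
        rcases lt_or_eq_of_le (not_lt.mp h) with h' | h'
        · exact Or.inr h'
        · exact Or.inl h'
      · rintro (rfl | h)
        · exact lt_irrefl _
        · exact not_lt.mpr h.le
    rw [this, Finset.sum_insert (by simp), hdiag, zero_add]
  simp_rw [h1, Finset.sum_add_distrib]
  congr 1
  exact Finset.sum_comm' (by intro x y; simp [and_comm])

/-- Vertical bracket norm formula: with `X = U Λ^{1/2}` (`U` having orthonormal columns,
`Λ = diag(λ)` positive), `S` skew-symmetric, and `Ω*` the skew-symmetric solution of
`(Xᵀ X) Ω* + Ω* (Xᵀ X) = 2 Xᵀ S X`, the squared Frobenius norm of the vertical component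
is `‖X Ω*‖_F² = tr((XΩ*)ᵀ (XΩ*)) = 4 Σ_{ι<γ} (λ_ι λ_γ)/(λ_ι + λ_γ) ((Uᵀ S U)_{ιγ})²`. -/
theorem vertical_bracket_norm_formula {n d : ℕ}
    (U : Matrix (Fin n) (Fin d) ℝ) (hU : Uᵀ * U = 1)
    (lam : Fin d → ℝ) (hlam : ∀ i, 0 < lam i)
    (S : Matrix (Fin n) (Fin n) ℝ) (hS : Sᵀ = -S)
    (X : Matrix (Fin n) (Fin d) ℝ)
    (hX : X = U * Matrix.diagonal (fun i => Real.sqrt (lam i)))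
    (Ω : Matrix (Fin d) (Fin d) ℝ) (hΩ : Ωᵀ = -Ω)
    (hLyap : (Xᵀ * X) * Ω + Ω * (Xᵀ * X) = (2 : ℝ) • (Xᵀ * S * X)) :
    Matrix.trace ((X * Ω)ᵀ * (X * Ω)) =
      4 * ∑ ι : Fin d, ∑ γ ∈ Finset.univ.filter (fun γ => ι < γ),
        (lam ι * lam γ) / (lam ι + lam γ) * ((Uᵀ * S * U) ι γ) ^ 2 := by
  set M := Uᵀ * S * U with hM
  have hMskew : Mᵀ = -M := by
    rw [hM]
    rw [Matrix.transpose_mul, Matrix.transpose_mul, Matrix.transpose_transpose, hS]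
    simp [Matrix.mul_assoc]
  have hMsym : ∀ i j, M j i = - M i j := by
    intro i j
    have := congrFun (congrFun hMskew i) j
    simpa [Matrix.transpose_apply, Matrix.neg_apply] using this
  have hMdiag : ∀ i, M i i = 0 := by
    intro i; have := hMsym i i; linarith
  have hXX : Xᵀ * X = Matrix.diagonal lam := by
    subst hX
    rw [Matrix.transpose_mul, Matrix.diagonal_transpose]
    rw [Matrix.mul_assoc, ← Matrix.mul_assoc Uᵀ, hU, Matrix.one_mul,
      Matrix.diagonal_mul_diagonal]
    have : (fun i => Real.sqrt (lam i) * Real.sqrt (lam i)) = lam :=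
      funext fun i => Real.mul_self_sqrt (hlam i).le
    rw [this]
  have hXSX : Xᵀ * S * X = Matrix.diagonal (fun i => Real.sqrt (lam i)) * M *
      Matrix.diagonal (fun i => Real.sqrt (lam i)) := by
    subst hX
    rw [Matrix.transpose_mul, Matrix.diagonal_transpose, hM]
    simp [Matrix.mul_assoc]
  have hΩval : ∀ i j, Ω i j = 2 * (Real.sqrt (lam i) * Real.sqrt (lam j) * M i j)
      / (lam i + lam j) := by
    intro i j
    have h := congrFun (congrFun hLyap i) j
    rw [hXX, hXSX] at h
    simp only [Matrix.add_apply, Matrix.smul_apply, Matrix.diagonal_mul, Matrix.mul_diagonal,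
      smul_eq_mul] at h
    have hpos : lam i + lam j > 0 := by have := hlam i; have := hlam j; linarith
    have h2 : (lam i + lam j) * Ω i j
        = 2 * (Real.sqrt (lam i) * M i j * Real.sqrt (lam j)) := by
      rw [← h]; ring
    field_simp
    rw [mul_comm (Ω i j), h2]; ring
  have hTr : Matrix.trace ((X * Ω)ᵀ * (X * Ω))
      = ∑ j : Fin d, ∑ i : Fin d, lam i * (Ω i j) ^ 2 := by
    rw [Matrix.transpose_mul, Matrix.mul_assoc, ← Matrix.mul_assoc Xᵀ, hXX]
    rw [Matrix.trace]
    congr 1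
    funext j
    rw [Matrix.diag_apply, Matrix.mul_apply]
    congr 1
    funext i
    rw [Matrix.diagonal_mul, Matrix.transpose_apply]
    ring
  rw [hTr]
  have key : ∑ j : Fin d, ∑ i : Fin d, lam i * (Ω i j) ^ 2
      = ∑ i : Fin d, ∑ j ∈ Finset.univ.filter (fun j => i < j),
          (lam j * (Ω j i) ^ 2 + lam i * (Ω i j) ^ 2) := by
    exact sum_pairs_aux (fun j i => lam i * (Ω i j) ^ 2)
      (fun i => by show lam i * Ω i i ^ 2 = 0; rw [hΩval, hMdiag]; simp)
  rw [key, Finset.mul_sum]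
  congr 1
  funext i
  rw [Finset.mul_sum]
  apply Finset.sum_congr rfl
  intro j hj
  have hij : i ≠ j := (Finset.mem_filter.mp hj).2.ne
  have hpos : lam i + lam j > 0 := by have := hlam i; have := hlam j; linarith
  have hsi : Real.sqrt (lam i) ^ 2 = lam i := Real.sq_sqrt (hlam i).le
  have hsj : Real.sqrt (lam j) ^ 2 = lam j := Real.sq_sqrt (hlam j).le
  rw [hΩval, hΩval, hMsym i j]
  rw [div_pow, div_pow]
  have e1 : (2 * (Real.sqrt (lam j) * Real.sqrt (lam i) * -M i j)) ^ 2
      = 4 * (lam i * lam j) * (M i j) ^ 2 := by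
    rw [mul_pow, mul_pow, mul_pow, neg_pow, hsi, hsj]; ring
  have e2 : (2 * (Real.sqrt (lam i) * Real.sqrt (lam j) * M i j)) ^ 2
      = 4 * (lam i * lam j) * (M i j) ^ 2 := by
    rw [mul_pow, mul_pow, mul_pow, hsi, hsj]; ring
  rw [e1, e2]
  have hadd : (lam j + lam i) = (lam i + lam j) := by ring
  rw [hadd]
  field_simp
  ring
end
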